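/- Let g ≥ 1 be an integer, q a nonzero complex number, α : Fin (2g) → ℂ, and e : Fin (2g) → Fin (2g) a fixed-point-free involution (e (e i) = i and e i ≠ i for all i) such that α i * α (e i) = q for every i. Consider the polynomial P(X) = (X − q)^2 · ∏_{(i,j) ∈ Fin (2g) × Fin (2g)} (X − α i * α j) in ℂ[X]. Then the root multiplicity of q in P is even. -/

import Mathlib

open Polynomial
open scoped Finset

/-
The multiplicity of `q` is `2` plus the number of pairs `(i, j)` with
`α i * α j = q`. Since `α i * α (e i) = q ≠ 0`, the map `(i, j) ↦ (e i, e j)` preserves this set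
of pairs, and it is a fixed-point-free involution, so the set has even cardinality.
-/

theorem Finset.even_card_of_involution {ι : Type*} (s : Finset ι) (g : ι → ι)
    (hmem : ∀ a ∈ s, g a ∈ s) (hinv : ∀ a ∈ s, g (g a) = a) (hne : ∀ a ∈ s, g a ≠ a) :
    Even #s := by
  -- each orbit `{a, g a}` contributes `1 + 1 = 0`
  have hsum : ∑ _ ∈ s, (1 : ZMod 2) = 0 :=
    sum_involution (fun a _ => g a) (fun _ _ => by decide) (fun a ha _ => hne a ha) hmem hinv
  simpa [ZMod.natCast_eq_zero_iff_even] using hsum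

theorem Polynomial.rootMultiplicity_prod_X_sub_C {R ι : Type*} [CommRing R] [IsDomain R]
    [DecidableEq R] (s : Finset ι) (f : ι → R) (a : R) :
    rootMultiplicity a (∏ i ∈ s, (X - C (f i))) = #{i ∈ s | f i = a} := by
  have hmap : s.val.map (fun i => X - C (f i)) = (s.val.map f).map (fun b => X - C b) := by
    rw [Multiset.map_map]; rfl
  rw [← count_roots, Finset.prod_eq_multiset_prod, hmap, roots_multiset_prod_X_sub_C,
    Multiset.count_map, Finset.card_def, Finset.filter_val]
  simp only [eq_comm]

theorem stmt_2_general (g : ℕ) (q : ℂ) (hq : q ≠ 0)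
    (α : Fin (2 * g) → ℂ) (e : Fin (2 * g) → Fin (2 * g))
    (he : ∀ i, e (e i) = i) (hfpf : ∀ i, e i ≠ i)
    (hprod : ∀ i, α i * α (e i) = q)
    (P : Polynomial ℂ)
    (hP : P = (X - C q) ^ 2 *
      ∏ p : Fin (2 * g) × Fin (2 * g), (X - C (α p.1 * α p.2))) :
    Even (P.rootMultiplicity q) := by
  have hprod_ne : ∏ p : Fin (2 * g) × Fin (2 * g), (X - C (α p.1 * α p.2)) ≠ 0 :=
    Finset.prod_ne_zero_iff.mpr fun _ _ => X_sub_C_ne_zero _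
  rw [hP, rootMultiplicity_mul (mul_ne_zero (pow_ne_zero _ (X_sub_C_ne_zero q)) hprod_ne),
    rootMultiplicity_X_sub_C_pow, rootMultiplicity_prod_X_sub_C]
  refine even_two.add (Finset.even_card_of_involution _ (Prod.map e e) ?_ ?_ ?_)
  · intro p hp
    simp only [Finset.mem_filter, Finset.mem_univ, true_and, Prod.map_fst, Prod.map_snd] at hp ⊢
    refine mul_left_cancel₀ hq ?_
    calc q * (α (e p.1) * α (e p.2))
        = (α p.1 * α (e p.1)) * (α p.2 * α (e p.2)) := by rw [← hp]; ring
      _ = q * q := by rw [hprod, hprod]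
  · intro p _
    exact Prod.ext (he p.1) (he p.2)
  · intro p _ h
    exact hfpf p.1 (congrArg Prod.fst h)

/-- The root multiplicity of `q` in `(X - q)^2 * ∏_{(i,j)} (X - α i * α j)` is even. -/
theorem stmt_2 (g : ℕ) (hg : 1 ≤ g) (q : ℂ) (hq : q ≠ 0)
    (α : Fin (2 * g) → ℂ) (e : Fin (2 * g) → Fin (2 * g))
    (he : ∀ i, e (e i) = i) (hfpf : ∀ i, e i ≠ i)
    (hprod : ∀ i, α i * α (e i) = q)
    (P : Polynomial ℂ)
    (hP : P = (X - C q) ^ 2 *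
      ∏ p : Fin (2 * g) × Fin (2 * g), (X - C (α p.1 * α p.2))) :
    Even (P.rootMultiplicity q) :=
  stmt_2_general g q hq α e he hfpf hprod P hP
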